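/- arXiv:2507.17341 — 2 statements merged into one kernel-verified Lean document; each statement's English description precedes it below -/
import Mathlib

section
/- Let ℓ ≥ 1 be an integer and let G_ℓ be the graph described in the context. Then the total domination number of G_ℓ equals 2ℓ, i.e. γ_t(G_ℓ) = 2ℓ. -/
/-- The edge relation of the graph `G_ℓ`: vertex `(i,j)` (0-indexed: `j : Fin 4`
corresponds to `j+1` in the paper) with 4-cycle edges in each block and the
path edges `(i,2)(i+1,2)` (0-indexed second coordinate `1`). -/
def cycleRel (l : ℕ) (p q : Fin l × Fin 4) : Prop :=
  (p.1 = q.1 ∧ ((p.2.val = 0 ∧ q.2.val = 1) ∨ (p.2.val = 0 ∧ q.2.val = 2) ∨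
     (p.2.val = 1 ∧ q.2.val = 3) ∨ (p.2.val = 2 ∧ q.2.val = 3))) ∨
  (q.1.val = p.1.val + 1 ∧ p.2.val = 1 ∧ q.2.val = 1)

/-- The graph `G_ℓ`. -/
def Gl (l : ℕ) : SimpleGraph (Fin l × Fin 4) := SimpleGraph.fromRel (cycleRel l)

/-- `D` is a total dominating set of `G`. -/
def IsTotalDomSet {V : Type*} (G : SimpleGraph V) (D : Finset V) : Prop :=
  ∀ v : V, ∃ d ∈ D, G.Adj v d

/-! Taking the vertices `(i,0)` and `(i,1)` of every block gives a total dominating set of size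
`2ℓ`. Conversely, in block `i` the vertices `(i,0)` and `(i,2)` have the disjoint neighbourhoods
`{(i,1),(i,2)}` and `{(i,0),(i,3)}`, both inside the block, so every total dominating set meets each
of the `ℓ` blocks at least twice. -/

open Finset

lemma IsTotalDomSet.two_le_card_filter {V : Type*} {G : SimpleGraph V} {D : Finset V}
    (hD : IsTotalDomSet G D) {u w : V} (hdisj : ∀ v, G.Adj u v → ¬G.Adj w v)
    {P : V → Prop} [DecidablePred P] (hu : ∀ v, G.Adj u v → P v)
    (hw : ∀ v, G.Adj w v → P v) :
    2 ≤ #{v ∈ D | P v} := by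
  obtain ⟨d, hdD, hud⟩ := hD u
  obtain ⟨d', hd'D, hwd'⟩ := hD w
  have hne : d ≠ d' := by
    rintro rfl
    exact hdisj d hud hwd'
  exact one_lt_card.mpr
    ⟨d, mem_filter.mpr ⟨hdD, hu d hud⟩, d', mem_filter.mpr ⟨hd'D, hw d' hwd'⟩, hne⟩

lemma gl_adj {l : ℕ} {p q : Fin l × Fin 4} :
    (Gl l).Adj p q ↔ p ≠ q ∧ (cycleRel l p q ∨ cycleRel l q p) :=
  SimpleGraph.fromRel_adj _ _ _

lemma eq_or_eq_of_gl_adj_zero {l : ℕ} {i : Fin l} {v : Fin l × Fin 4} (h : (Gl l).Adj (i, 0) v) :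
    v = (i, 1) ∨ v = (i, 2) := by
  obtain ⟨j, k⟩ := v
  obtain ⟨-, h | h⟩ := gl_adj.mp h <;> simp only [cycleRel] at h <;> fin_cases k <;> grind

lemma eq_or_eq_of_gl_adj_two {l : ℕ} {i : Fin l} {v : Fin l × Fin 4} (h : (Gl l).Adj (i, 2) v) :
    v = (i, 0) ∨ v = (i, 3) := by
  obtain ⟨j, k⟩ := v
  obtain ⟨-, h | h⟩ := gl_adj.mp h <;> simp only [cycleRel] at h <;> fin_cases k <;> grind

lemma isTotalDomSet_gl_univ_prod (l : ℕ) :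
    IsTotalDomSet (Gl l) (univ ×ˢ {0, 1}) := by
  rintro ⟨i, j⟩
  fin_cases j
  · exact ⟨(i, 1), by simp, gl_adj.mpr ⟨by simp, Or.inl (by simp [cycleRel])⟩⟩
  · exact ⟨(i, 0), by simp, gl_adj.mpr ⟨by simp, Or.inr (by simp [cycleRel])⟩⟩
  · exact ⟨(i, 0), by simp, gl_adj.mpr ⟨by simp, Or.inr (by simp [cycleRel])⟩⟩
  · exact ⟨(i, 1), by simp, gl_adj.mpr ⟨by simp, Or.inr (by simp [cycleRel])⟩⟩

lemma IsTotalDomSet.two_mul_le_card_of_gl {l : ℕ} {D : Finset (Fin l × Fin 4)}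
    (hD : IsTotalDomSet (Gl l) D) : 2 * l ≤ #D := by
  have hblock (i : Fin l) : 2 ≤ #{p ∈ D | p.1 = i} := by
    refine hD.two_le_card_filter (u := (i, 0)) (w := (i, 2)) ?_ ?_ ?_
    · intro v h0 h2
      rcases eq_or_eq_of_gl_adj_zero h0 with rfl | rfl <;>
        rcases eq_or_eq_of_gl_adj_two h2 with h | h <;> simp at h
    · intro v h
      rcases eq_or_eq_of_gl_adj_zero h with rfl | rfl <;> rfl
    · intro v h
      rcases eq_or_eq_of_gl_adj_two h with rfl | rfl <;> rfl
  simpa using mul_card_image_le_card_of_maps_to (fun p _ ↦ mem_univ p.1) 2 fun i _ ↦ hblock i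

theorem stmt1_general (l : ℕ) :
    sInf {n : ℕ | ∃ D : Finset (Fin l × Fin 4),
      IsTotalDomSet (Gl l) D ∧ D.card = n} = 2 * l := by
  refine IsLeast.csInf_eq ⟨⟨_, isTotalDomSet_gl_univ_prod l, by simp [mul_comm]⟩, ?_⟩
  rintro n ⟨D, hD, rfl⟩
  exact hD.two_mul_le_card_of_gl

/-- The total domination number of `G_ℓ` equals `2ℓ`. -/
theorem stmt1 (l : ℕ) (hl : 1 ≤ l) :
    sInf {n : ℕ | ∃ D : Finset (Fin l × Fin 4),
      IsTotalDomSet (Gl l) D ∧ D.card = n} = 2 * l :=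
  stmt1_general l
end

section
/- Let k ≥ 2 and n ≥ 4 be integers and let H_{k,n} be the graph described in the context. Then the domination number and the total domination number of H_{k,n} both equal k, i.e. γ(H_{k,n}) = γ_t(H_{k,n}) = k. -/
/-- Vertices of `H_{k,n}`: the clique vertices `y_j` (`Sum.inl`), the vertices
`z_{i,j}` (`Sum.inr (Sum.inl (i,j))`, 0-indexed), and the two vertices
`u = Sum.inr (Sum.inr false)` and `v = Sum.inr (Sum.inr true)`. -/
abbrev HknV (k n : ℕ) := Fin n ⊕ ((Fin (k - 1) × Fin n) ⊕ Bool)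

/-- Edge relation of `H_{k,n}`: the `y`'s form a `K_n`; for each `i` the
`z_{i,·}`'s form a `K_n` minus the edge `z_{i,1} z_{i,2}` (0-indexed: second
coordinates `0` and `1`); both `u` and `v` are adjacent to every `y_j` and to
`z_{i,1}`, `z_{i,2}` for every `i`; `u` and `v` are nonadjacent. -/
def HknRel (k n : ℕ) : HknV k n → HknV k n → Prop
  | .inl _, .inl _ => True
  | .inr (.inl p), .inr (.inl q) =>
      p.1 = q.1 ∧ ¬((p.2.val = 0 ∧ q.2.val = 1) ∨ (p.2.val = 1 ∧ q.2.val = 0))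
  | .inr (.inr _), .inl _ => True
  | .inr (.inr _), .inr (.inl p) => p.2.val = 0 ∨ p.2.val = 1
  | _, _ => False

/-- The graph `H_{k,n}`. -/
def Hkn (k n : ℕ) : SimpleGraph (HknV k n) := SimpleGraph.fromRel (HknRel k n)

/-- `D` is a dominating set of `G`. -/
def IsDomSet {V : Type*} (G : SimpleGraph V) (D : Finset V) : Prop :=
  ∀ v : V, v ∉ D → ∃ d ∈ D, G.Adj v d

/-!
The set `{u} ∪ {z_{i,1}}` of size `k` is a total dominating set. Conversely `y_1` together with
the vertices `z_{i,3}` form a 2-packing: the closed neighbourhood of `y_1` avoids all `z`'s and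
that of `z_{i,3}` stays inside the `i`-th `z`-block, because `u` and `v` only see `z_{i,1}` and
`z_{i,2}`. Every dominating set meets each of these `k` disjoint closed neighbourhoods.
-/

section Domination

variable {V : Type*} (G : SimpleGraph V)

/-- A 2-packing: the closed neighbourhoods of its members are pairwise disjoint. -/
def IsPacking (S : Finset V) : Prop :=
  ∀ ⦃s⦄, s ∈ S → ∀ ⦃t⦄, t ∈ S → ∀ x, (x = s ∨ G.Adj s x) → (x = t ∨ G.Adj t x) → s = t

variable {G}

theorem IsTotalDomSet.isDomSet {D : Finset V} (hD : IsTotalDomSet G D) : IsDomSet G D :=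
  fun v _ => hD v

/-- A dominating set meets the closed neighbourhood of every vertex, and these are pairwise
disjoint around a packing. -/
theorem IsDomSet.card_le_of_isPacking {D S : Finset V} (hD : IsDomSet G D) (hS : IsPacking G S) :
    S.card ≤ D.card := by
  have hmeet : ∀ s, ∃ d ∈ D, d = s ∨ G.Adj s d := by
    intro s
    by_cases hs : s ∈ D
    · exact ⟨s, hs, .inl rfl⟩
    · obtain ⟨d, hd, hsd⟩ := hD s hs
      exact ⟨d, hd, .inr hsd⟩
  choose f hfD hf using hmeet
  exact Finset.card_le_card_of_injOn f (fun s _ => hfD s)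
    fun s hs t ht hst => hS hs ht (f s) (hf s) (hst ▸ hf t)

theorem sInf_card_eq_of_forall_le {P : Finset V → Prop} {k : ℕ} (hP : ∃ D, P D ∧ D.card = k)
    (hle : ∀ D, P D → k ≤ D.card) : sInf {m : ℕ | ∃ D, P D ∧ D.card = m} = k :=
  IsLeast.csInf_eq ⟨hP, by rintro _ ⟨D, hD, rfl⟩; exact hle D hD⟩

end Domination

namespace Hkn

variable {k n : ℕ}

abbrev y (j : Fin n) : HknV k n := .inl j

abbrev z (i : Fin (k - 1)) (j : Fin n) : HknV k n := .inr (.inl (i, j))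

abbrev u : HknV k n := .inr (.inr false)

theorem card_insert_image_z {w : HknV k n} (hw : ∀ i j, w ≠ z i j) (hk : 1 ≤ k) (b : Fin n) :
    (insert w (Finset.univ.image fun i => z i b)).card = k := by
  rw [Finset.card_insert_of_notMem (by simpa using fun i => (hw i b).symm),
    Finset.card_image_of_injective _ fun i i' h => by simpa using h]
  simp only [Finset.card_univ, Fintype.card_fin]
  omega

theorem isTotalDomSet_insert_u_image_z (hk : 2 ≤ k) (a : Fin n) (ha : a.val ≤ 1) :
    IsTotalDomSet (Hkn k n) (insert u (Finset.univ.image fun i => z i a)) := by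
  rintro (j | ⟨i, j⟩ | b)
  · exact ⟨u, by simp, by simp [Hkn, HknRel]⟩
  · by_cases hj : j.val ≤ 1
    · refine ⟨u, by simp, ?_⟩
      simp only [Hkn, SimpleGraph.fromRel_adj, ne_eq, Sum.inr.injEq, reduceCtorEq,
        not_false_eq_true, HknRel, false_or, true_and]
      omega
    · refine ⟨z i a, by simp, ?_⟩
      simp only [Hkn, SimpleGraph.fromRel_adj, ne_eq, Sum.inr.injEq, Sum.inl.injEq,
        Prod.mk.injEq, Fin.ext_iff, true_and, HknRel, not_or, not_and]
      omega
  · refine ⟨z ⟨0, by omega⟩ a, by simp, ?_⟩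
    simp only [Hkn, SimpleGraph.fromRel_adj, ne_eq, Sum.inr.injEq, reduceCtorEq,
      not_false_eq_true, HknRel, or_false, true_and]
    omega

def block : HknV k n → Option (Fin (k - 1))
  | .inr (.inl (i, _)) => some i
  | _ => none

theorem block_eq_none_of_closedNbhd_y {a : Fin n} {x : HknV k n}
    (hx : x = y a ∨ (Hkn k n).Adj (y a) x) : block x = none := by
  rcases x with _ | ⟨_, _⟩ | _ <;> simp_all [Hkn, HknRel, block]

theorem block_eq_some_of_closedNbhd_z {i : Fin (k - 1)} {b : Fin n} (hb : 2 ≤ b.val)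
    {x : HknV k n} (hx : x = z i b ∨ (Hkn k n).Adj (z i b) x) : block x = some i := by
  rcases x with _ | ⟨_, _⟩ | _ <;> simp_all [Hkn, HknRel, block, Fin.ext_iff] <;> omega

theorem isPacking_insert_y_image_z (a b : Fin n) (hb : 2 ≤ b.val) :
    IsPacking (Hkn k n) (insert (y a) (Finset.univ.image fun i => z i b)) := by
  simp only [IsPacking, Finset.mem_insert, Finset.mem_image, Finset.mem_univ, true_and]
  rintro s (rfl | ⟨i, rfl⟩) t (rfl | ⟨i', rfl⟩) x hs ht
  · rfl
  · cases (block_eq_none_of_closedNbhd_y hs).symm.trans (block_eq_some_of_closedNbhd_z hb ht)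
  · cases (block_eq_none_of_closedNbhd_y ht).symm.trans (block_eq_some_of_closedNbhd_z hb hs)
  · cases (block_eq_some_of_closedNbhd_z hb hs).symm.trans (block_eq_some_of_closedNbhd_z hb ht)
    rfl

end Hkn

/-- The domination number and total domination number of `H_{k,n}` both
equal `k`. -/
theorem stmt6 (k n : ℕ) (hk : 2 ≤ k) (hn : 4 ≤ n) :
    sInf {m : ℕ | ∃ D : Finset (HknV k n), IsDomSet (Hkn k n) D ∧ D.card = m} = k ∧
    sInf {m : ℕ | ∃ D : Finset (HknV k n), IsTotalDomSet (Hkn k n) D ∧ D.card = m} = k := by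
  have hD := Hkn.isTotalDomSet_insert_u_image_z (n := n) hk ⟨0, by omega⟩ (Nat.zero_le 1)
  have hDcard :=
    Hkn.card_insert_image_z (w := (Hkn.u : HknV k n)) (by simp) (by omega) ⟨0, by omega⟩
  have hS := Hkn.isPacking_insert_y_image_z (k := k) (n := n) ⟨0, by omega⟩ ⟨2, by omega⟩ le_rfl
  have hScard :=
    Hkn.card_insert_image_z (w := (Hkn.y ⟨0, by omega⟩ : HknV k n)) (by simp) (by omega)
      ⟨2, by omega⟩
  have hle (D : Finset (HknV k n)) (hD : IsDomSet (Hkn k n) D) : k ≤ D.card :=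
    hScard.ge.trans (hD.card_le_of_isPacking hS)
  exact ⟨sInf_card_eq_of_forall_le ⟨_, hD.isDomSet, hDcard⟩ hle,
    sInf_card_eq_of_forall_le ⟨_, hD, hDcard⟩ fun D hD => hle D hD.isDomSet⟩
end
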